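/- arXiv:1406.4325 — 3 statements merged into one kernel-verified Lean document; each statement's English description precedes it below -/
import Mathlib

section
/- Let n ≥ 1 and let P ⊆ ℝ₊ⁿ be a convex rational polyhedron, i.e. P = ⋂_{j=1}^N H⁺(aʲ, l_j) for some aʲ ∈ ℤⁿ and l_j ∈ ℤ. Then the following are equivalent: (i) P + ℝ₊ⁿ ⊆ P; (ii) there exist finitely many pairs (b¹,k₁),…,(b^M,k_M) ∈ ℤ₊ⁿ × ℤ₊ such that P = ⋂_{j=1}^M H⁺(bʲ, k_j). -/
open Set

/-!
The condition `P + ℝ₊ⁿ ⊆ P` says that `P` is an upper set for the coordinatewise order.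
A nonempty upper set contained in a halfspace `H⁺(a, l)` forces `a ≥ 0`: otherwise moving far
along a coordinate direction with `aᵢ < 0` leaves the halfspace. Once all `aʲ ≥ 0`, on `ℝ₊ⁿ` the
inequality `⟨aʲ, x⟩ ≥ lⱼ` is equivalent to `⟨aʲ, x⟩ ≥ max lⱼ 0`, and `ℝ₊ⁿ` itself is cut out by
the halfspaces `H⁺(eᵢ, 0)`, so `P` is an intersection of halfspaces with data in `ℤ₊ⁿ × ℤ₊`.
Conversely such halfspaces, and hence their intersections, are upper sets.
-/

theorem isUpperSet_iff_add_nonneg_mem {α : Type*} [AddCommGroup α] [PartialOrder α]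
    [IsOrderedAddMonoid α] {s : Set α} :
    IsUpperSet s ↔ ∀ x ∈ s, ∀ y, 0 ≤ y → x + y ∈ s := by
  refine ⟨fun hs x hx y hy => hs (le_add_of_nonneg_right hy) hx, fun hs x z hxz hx => ?_⟩
  simpa using hs x hx (z - x) (sub_nonneg.mpr hxz)

theorem Int.natCast_toNat_eq_max {R : Type*} [Ring R] [LinearOrder R] [IsStrictOrderedRing R]
    (z : ℤ) : ((z.toNat : ℕ) : R) = max (z : R) 0 := by
  rw [← Int.cast_natCast, Int.toNat_eq_max, Int.cast_max, Int.cast_zero]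

section Halfspace

variable {ι : Type*} [Fintype ι]

def halfspace (a : ι → ℝ) (l : ℝ) : Set (ι → ℝ) := {x | l ≤ a ⬝ᵥ x}

abbrev natHalfspace (b : ι → ℕ) (k : ℕ) : Set (ι → ℝ) := halfspace (fun i => (b i : ℝ)) k

theorem isUpperSet_halfspace {a : ι → ℝ} (ha : 0 ≤ a) (l : ℝ) : IsUpperSet (halfspace a l) :=
  fun _ _ hxy hx => hx.trans (dotProduct_le_dotProduct_of_nonneg_left hxy ha)

theorem isUpperSet_natHalfspace (b : ι → ℕ) (k : ℕ) : IsUpperSet (natHalfspace b k) :=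
  isUpperSet_halfspace (fun i => Nat.cast_nonneg (b i)) k

theorem nonneg_of_isUpperSet_subset_halfspace [DecidableEq ι] {P : Set (ι → ℝ)} {a : ι → ℝ}
    {l : ℝ} (hP : IsUpperSet P) (hne : P.Nonempty) (hsub : P ⊆ halfspace a l) : 0 ≤ a := by
  obtain ⟨x, hx⟩ := hne
  intro i
  show 0 ≤ a i
  by_contra! hai
  have hl : l ≤ a ⬝ᵥ x := hsub hx
  set t := (a ⬝ᵥ x - l + 1) / -a i
  have ht : t * a i = -(a ⬝ᵥ x - l + 1) := by
    rw [div_mul_eq_mul_div, div_neg, mul_div_cancel_right₀ _ hai.ne]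
  have hmem : x + Pi.single i t ∈ P := by
    refine hP (le_add_of_nonneg_right ?_) hx
    exact Pi.single_nonneg.mpr (div_nonneg (by linarith) (by linarith))
  have hl' : l ≤ a ⬝ᵥ x + a i * t := by
    simpa only [halfspace, mem_ofPred_eq, dotProduct_add, dotProduct_single] using hsub hmem
  linarith

theorem mem_halfspace_iff_max_zero {a x : ι → ℝ} (ha : 0 ≤ a) (hx : 0 ≤ x) (l : ℝ) :
    x ∈ halfspace a l ↔ x ∈ halfspace a (max l 0) := by
  simp [halfspace, dotProduct_nonneg_of_nonneg ha hx]

theorem Ici_zero_eq_iInter_natHalfspace_single [DecidableEq ι] :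
    Ici (0 : ι → ℝ) = ⋂ i, natHalfspace (Pi.single i 1) 0 := by
  ext x
  simp [halfspace, dotProduct, Pi.single_apply, Pi.le_def]

theorem iInter_halfspace_inter_Ici_zero {κ : Type*} {a : κ → ι → ℝ} (ha : ∀ j, 0 ≤ a j)
    (l : κ → ℝ) :
    (⋂ j, halfspace (a j) (l j)) ∩ Ici 0 = (⋂ j, halfspace (a j) (max (l j) 0)) ∩ Ici 0 := by
  ext x
  simp only [mem_inter_iff, mem_iInter, mem_Ici]
  exact and_congr_left fun hx => forall_congr' fun j => mem_halfspace_iff_max_zero (ha j) hx (l j)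

theorem exists_fin_iInter_natHalfspace_eq {κ : Type*} [Finite κ] (b : κ → ι → ℕ) (k : κ → ℕ) :
    ∃ (M : ℕ) (b' : Fin M → ι → ℕ) (k' : Fin M → ℕ),
      ⋂ j, natHalfspace (b' j) (k' j) = ⋂ j, natHalfspace (b j) (k j) := by
  obtain ⟨M, ⟨e⟩⟩ := Finite.exists_equiv_fin κ
  exact ⟨M, b ∘ e.symm, k ∘ e.symm,
    e.symm.surjective.iInter_comp fun j => natHalfspace (b j) (k j)⟩

theorem exists_iInter_natHalfspace_of_isUpperSet [DecidableEq ι] {κ : Type*} [Finite κ]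
    (a : κ → ι → ℤ) (l : κ → ℤ) {P : Set (ι → ℝ)}
    (hP : P = ⋂ j, halfspace (fun i => (a j i : ℝ)) (l j)) (hpos : P ⊆ Ici 0)
    (hup : IsUpperSet P) :
    ∃ (M : ℕ) (b : Fin M → ι → ℕ) (k : Fin M → ℕ), P = ⋂ j, natHalfspace (b j) (k j) := by
  rcases P.eq_empty_or_nonempty with rfl | hne
  · exact ⟨1, fun _ _ => 0, fun _ => 1, by ext; simp [halfspace]⟩
  have ha : ∀ j, 0 ≤ fun i => (a j i : ℝ) := fun j =>
    nonneg_of_isUpperSet_subset_halfspace hup hne (hP ▸ iInter_subset _ j)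
  have hcoeff : ∀ j i, max (a j i : ℝ) 0 = a j i := fun j i => max_eq_left (ha j i)
  obtain ⟨M, b, k, hbk⟩ := exists_fin_iInter_natHalfspace_eq
    (Sum.elim (fun j i => (a j i).toNat) fun i => Pi.single i 1)
    (Sum.elim (fun j => (l j).toNat) 0)
  refine ⟨M, b, k, ?_⟩
  calc P = (⋂ j, halfspace (fun i => (a j i : ℝ)) (l j)) ∩ Ici 0 := by
        rw [← hP, inter_eq_left.mpr hpos]
    _ = (⋂ j, halfspace (fun i => (a j i : ℝ)) (max (l j : ℝ) 0)) ∩ Ici 0 :=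
        iInter_halfspace_inter_Ici_zero ha _
    _ = (⋂ j, natHalfspace (fun i => (a j i).toNat) (l j).toNat) ∩
          ⋂ i, natHalfspace (Pi.single i 1) 0 := by
        simp only [natHalfspace, Int.natCast_toNat_eq_max, hcoeff,
          Ici_zero_eq_iInter_natHalfspace_single]
    _ = ⋂ j, natHalfspace (b j) (k j) := by
        rw [hbk, iInter_sum]
        rfl

end Halfspace

theorem stmt0_general (n : ℕ) (N : ℕ) (a : Fin N → Fin n → ℤ) (l : Fin N → ℤ)
    (P : Set (Fin n → ℝ))
    (hP : P = ⋂ j, {x : Fin n → ℝ | (l j : ℝ) ≤ ∑ i, (a j i : ℝ) * x i})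
    (hpos : P ⊆ {x : Fin n → ℝ | ∀ i, 0 ≤ x i}) :
    (∀ x ∈ P, ∀ y : Fin n → ℝ, (∀ i, 0 ≤ y i) → x + y ∈ P) ↔
      (∃ (M : ℕ) (b : Fin M → Fin n → ℕ) (k : Fin M → ℕ),
        P = ⋂ j, {x : Fin n → ℝ | (k j : ℝ) ≤ ∑ i, (b j i : ℝ) * x i}) := by
  refine isUpperSet_iff_add_nonneg_mem.symm.trans ⟨fun hup => ?_, ?_⟩
  · exact exists_iInter_natHalfspace_of_isUpperSet a l hP hpos hup
  · rintro ⟨M, b, k, rfl⟩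
    exact isUpperSet_iInter fun j => isUpperSet_natHalfspace (b j) (k j)

/-- For a convex rational polyhedron `P ⊆ ℝ₊ⁿ`, the condition
`P + ℝ₊ⁿ ⊆ P` is equivalent to `P` being a finite intersection of halfspaces
`H⁺(b, k)` with `b ∈ ℤ₊ⁿ` and `k ∈ ℤ₊`. -/
theorem stmt0 (n : ℕ) (hn : 1 ≤ n) (N : ℕ) (a : Fin N → Fin n → ℤ) (l : Fin N → ℤ)
    (P : Set (Fin n → ℝ))
    (hP : P = ⋂ j, {x : Fin n → ℝ | (l j : ℝ) ≤ ∑ i, (a j i : ℝ) * x i})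
    (hpos : P ⊆ {x : Fin n → ℝ | ∀ i, 0 ≤ x i}) :
    (∀ x ∈ P, ∀ y : Fin n → ℝ, (∀ i, 0 ≤ y i) → x + y ∈ P) ↔
      (∃ (M : ℕ) (b : Fin M → Fin n → ℕ) (k : Fin M → ℕ),
        P = ⋂ j, {x : Fin n → ℝ | (k j : ℝ) ≤ ∑ i, (b j i : ℝ) * x i}) :=
  stmt0_general n N a l P hP hpos
end

section
/- Let ψ : ℝ → ℂ be a smooth compactly supported function. Then L₁(s) := ∫₀^∞ yˢ ψ(y) dy converges and is holomorphic on {s ∈ ℂ : Re s > −1}, and it extends to a meromorphic function on ℂ whose poles are all simple and contained in the set of negative integers; moreover, for every positive integer k, lim_{s→−k} (s+k)·L₁(s) = ψ^{(k−1)}(0)/(k−1)!; in particular, lim_{s→−1} (s+1)·L₁(s) = ψ(0). -/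
/-!
Integrating by parts against `t ^ s / s`, whose boundary terms vanish by compact support and
because `t ^ s → 0` at `0` when `0 < re s`, gives `mellin f s = -s⁻¹ * mellin f' (s + 1)`.
Iterating `n` times writes `mellin f s` as `(-1)ⁿ mellin f⁽ⁿ⁾ (s + n) / (s (s + 1) ⋯ (s + n - 1))`,
which is holomorphic on `-n < re s` away from `0, -1, …, 1 - n`; these formulas agree on overlaps
and glue to a continuation of `mellin f` to `ℂ`. Near `-k`, with `n = k + 1`, multiplying by
`s + k` leaves `(-1)ᵏ⁺¹ mellin f⁽ᵏ⁺¹⁾ 1 / ((-1)ᵏ k!)`, and `mellin f⁽ᵏ⁺¹⁾ 1 = ∫₀^∞ f⁽ᵏ⁺¹⁾ = -f⁽ᵏ⁾(0)`.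
The integral of the theorem is `mellin ψ (s + 1)`.
-/

open Filter Topology MeasureTheory Set Complex Asymptotics

open scoped ContDiff

theorem HasCompactSupport.eventuallyEq_zero_atTop {M : Type*} [Zero M] {f : ℝ → M}
    (hf : HasCompactSupport f) : f =ᶠ[atTop] 0 := by
  rw [hasCompactSupport_iff_eventuallyEq, coclosedCompact_eq_cocompact] at hf
  exact hf.filter_mono atTop_le_cocompact

section

variable {E : Type*} [NormedAddCommGroup E]

theorem HasCompactSupport.isBigO_atTop {F : Type*} [Norm F] {f : ℝ → E}
    (hf : HasCompactSupport f) (g : ℝ → F) : f =O[atTop] g :=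
  hf.eventuallyEq_zero_atTop.trans_isBigO (isBigO_zero g atTop)

theorem Continuous.isBigO_rpow_neg_zero_nhdsGT {f : ℝ → E} (hf : Continuous f) :
    f =O[𝓝[>] 0] (· ^ (-(0 : ℝ))) := by
  simpa only [neg_zero, Real.rpow_zero] using
    ((hf.tendsto 0).mono_left nhdsWithin_le_nhds).isBigO_one ℝ

theorem mellinConvergent_of_hasCompactSupport [NormedSpace ℂ E] {f : ℝ → E} (hf : Continuous f)
    (hsupp : HasCompactSupport f) {s : ℂ} (hs : 0 < s.re) : MellinConvergent f s :=
  mellinConvergent_of_isBigO_rpow (a := s.re + 1) (hf.locallyIntegrable.locallyIntegrableOn _)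
    (hsupp.isBigO_atTop _) (lt_add_one _) hf.isBigO_rpow_neg_zero_nhdsGT hs

theorem mellin_differentiableAt_of_hasCompactSupport [NormedSpace ℂ E] [CompleteSpace E]
    {f : ℝ → E} (hf : Continuous f) (hsupp : HasCompactSupport f) {s : ℂ} (hs : 0 < s.re) :
    DifferentiableAt ℂ (mellin f) s :=
  mellin_differentiableAt_of_isBigO_rpow (a := s.re + 1)
    (hf.locallyIntegrable.locallyIntegrableOn _) (hsupp.isBigO_atTop _) (lt_add_one _)
    hf.isBigO_rpow_neg_zero_nhdsGT hs

end

theorem mellin_eq_neg_inv_mul_mellin_deriv {f : ℝ → ℂ} (hf : ContDiff ℝ 1 f)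
    (hsupp : HasCompactSupport f) {s : ℂ} (hs : 0 < s.re) :
    mellin f s = -s⁻¹ * mellin (deriv f) (s + 1) := by
  have hs0 : s ≠ 0 := by rintro rfl; simp at hs
  set u : ℝ → ℂ := fun t => (t : ℂ) ^ s / s
  have hu : ∀ t ∈ Ioi (0 : ℝ), HasDerivAt u ((t : ℂ) ^ (s - 1)) t := fun t ht => by
    simpa [u] using hasDerivAt_ofReal_cpow_const' (ne_of_gt ht) (r := s - 1)
      (fun h => hs0 (by linear_combination h))
  have hv : ∀ t ∈ Ioi (0 : ℝ), HasDerivAt f (deriv f t) t := fun t _ =>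
    (hf.differentiable one_ne_zero t).hasDerivAt
  have hconv' : MellinConvergent (deriv f) (s + 1) :=
    mellinConvergent_of_hasCompactSupport (hf.continuous_deriv le_rfl) hsupp.deriv
      (by simp only [add_re, one_re]; linarith)
  have huv' : IntegrableOn (u * deriv f) (Ioi 0) := by
    refine (hconv'.const_smul s⁻¹).congr_fun (fun t _ => ?_) measurableSet_Ioi
    simp only [Pi.mul_apply, u, smul_eq_mul, add_sub_cancel_right]
    ring
  have hu'v : IntegrableOn ((fun t : ℝ => (t : ℂ) ^ (s - 1)) * f) (Ioi 0) :=
    mellinConvergent_of_hasCompactSupport hf.continuous hsupp hs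
  have h_zero : Tendsto (u * f) (𝓝[>] 0) (𝓝 0) := by
    have hcont : Continuous (u * f) :=
      ((continuous_ofReal_cpow_const hs).div_const s).mul hf.continuous
    simpa [u, zero_cpow hs0] using hcont.continuousWithinAt.tendsto (x := 0) (s := Ioi 0)
  have h_infty : Tendsto (u * f) atTop (𝓝 0) :=
    tendsto_nhds_of_eventually_eq <| hsupp.eventuallyEq_zero_atTop.mono fun t ht => by
      simp [ht]
  have hibp := integral_Ioi_mul_deriv_eq_deriv_mul hu hv huv' hu'v h_zero h_infty
  have hlhs : ∫ t in Ioi (0 : ℝ), u t * deriv f t = s⁻¹ * mellin (deriv f) (s + 1) := by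
    simp only [mellin, u, add_sub_cancel_right, smul_eq_mul, ← integral_const_mul]
    congr! 2 with t
    ring
  rw [sub_self, zero_sub, hlhs] at hibp
  change ∫ t in Ioi (0 : ℝ), (t : ℂ) ^ (s - 1) * f t = _
  linear_combination hibp

theorem mellin_one_deriv {f : ℝ → ℂ} (hf : ContDiff ℝ 1 f) (hsupp : HasCompactSupport f) :
    mellin (deriv f) 1 = -f 0 := by
  simpa [mellin] using hsupp.integral_Ioi_deriv_eq hf 0

theorem ascPochhammer_eval_neg_natCast_self (R : Type*) [CommRing R] (k : ℕ) :
    (ascPochhammer R k).eval (-(k : R)) = (-1) ^ k * k.factorial := by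
  rw [ascPochhammer_eval_neg_eq_descPochhammer, descPochhammer_eval_eq_descFactorial,
    Nat.descFactorial_self]

theorem HasCompactSupport.iteratedDeriv {𝕜 F : Type*} [NontriviallyNormedField 𝕜]
    [NormedAddCommGroup F] [NormedSpace 𝕜 F] {f : 𝕜 → F} (hf : HasCompactSupport f) (n : ℕ) :
    HasCompactSupport (iteratedDeriv n f) := by
  induction n with
  | zero => simpa using hf
  | succ n ih => simpa [iteratedDeriv_succ] using ih.deriv

theorem ContDiff.iteratedDeriv {𝕜 F : Type*} [NontriviallyNormedField 𝕜]
    [NormedAddCommGroup F] [NormedSpace 𝕜 F] {f : 𝕜 → F} (hf : ContDiff 𝕜 ∞ f) (n : ℕ) :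
    ContDiff 𝕜 ∞ (iteratedDeriv n f) := by
  rw [iteratedDeriv_eq_iterate]
  exact hf.iterate_deriv n

/-- `(-1)ⁿ mellin f⁽ⁿ⁾ (s + n) / (s (s + 1) ⋯ (s + n - 1))`, which equals `mellin f s` when
`0 < re s` and continues it to `-n < re s`. -/
noncomputable def mellinShift (f : ℝ → ℂ) (n : ℕ) (s : ℂ) : ℂ :=
  (-1) ^ n * ((ascPochhammer ℂ n).eval s)⁻¹ * mellin (iteratedDeriv n f) (s + n)

/-- Any `n` with `-n < re s` would give the same value, see `mellinExtension_eq_mellinShift`. -/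
noncomputable def mellinExtension (f : ℝ → ℂ) (s : ℂ) : ℂ :=
  mellinShift f (⌊-s.re⌋₊ + 1) s

theorem mellinShift_zero (f : ℝ → ℂ) : mellinShift f 0 = mellin f := by
  ext s
  simp [mellinShift]

theorem mellinShift_succ {f : ℝ → ℂ} (hf : ContDiff ℝ ∞ f) (hsupp : HasCompactSupport f)
    {n : ℕ} {s : ℂ} (hs : -(n : ℝ) < s.re) : mellinShift f (n + 1) s = mellinShift f n s := by
  have hibp := mellin_eq_neg_inv_mul_mellin_deriv ((hf.iteratedDeriv n).of_le (by simp))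
    (hsupp.iteratedDeriv n) (s := s + n) (by simp only [add_re, natCast_re]; linarith)
  rw [← iteratedDeriv_succ] at hibp
  simp only [mellinShift, hibp, ascPochhammer_succ_eval, pow_succ, mul_inv, Nat.cast_succ,
    add_assoc]
  ring

theorem mellinShift_eq_of_le {f : ℝ → ℂ} (hf : ContDiff ℝ ∞ f) (hsupp : HasCompactSupport f)
    {n m : ℕ} (hnm : n ≤ m) {s : ℂ} (hs : -(n : ℝ) < s.re) :
    mellinShift f m s = mellinShift f n s := by
  induction m, hnm using Nat.le_induction with
  | base => rfl
  | succ m hnm ih =>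
    rw [mellinShift_succ hf hsupp (lt_of_le_of_lt (by simpa using hnm) hs), ih]

theorem mellinExtension_eq_mellinShift {f : ℝ → ℂ} (hf : ContDiff ℝ ∞ f)
    (hsupp : HasCompactSupport f) {n : ℕ} {s : ℂ} (hs : -(n : ℝ) < s.re) :
    mellinExtension f s = mellinShift f n s := by
  have hN : -((⌊-s.re⌋₊ + 1 : ℕ) : ℝ) < s.re := by
    push_cast
    linarith [Nat.lt_floor_add_one (-s.re)]
  rcases le_total n (⌊-s.re⌋₊ + 1) with h | h
  · exact mellinShift_eq_of_le hf hsupp h hs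
  · exact (mellinShift_eq_of_le hf hsupp h hN).symm

theorem mellinExtension_eq_mellin {f : ℝ → ℂ} (hf : ContDiff ℝ ∞ f)
    (hsupp : HasCompactSupport f) {s : ℂ} (hs : 0 < s.re) :
    mellinExtension f s = mellin f s := by
  rw [mellinExtension_eq_mellinShift hf hsupp (n := 0) (by simpa using hs), mellinShift_zero]

theorem differentiableAt_mellin_iteratedDeriv_add {f : ℝ → ℂ} (hf : ContDiff ℝ ∞ f)
    (hsupp : HasCompactSupport f) (n : ℕ) {s c : ℂ} (hs : 0 < (s + c).re) :
    DifferentiableAt ℂ (fun s => mellin (iteratedDeriv n f) (s + c)) s :=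
  differentiableAt_comp_add_const.mpr <| mellin_differentiableAt_of_hasCompactSupport
    (hf.iteratedDeriv n).continuous (hsupp.iteratedDeriv n) hs

theorem differentiableAt_mellinShift {f : ℝ → ℂ} (hf : ContDiff ℝ ∞ f)
    (hsupp : HasCompactSupport f) {n : ℕ} {s : ℂ} (hs : -(n : ℝ) < s.re)
    (hpole : ∀ k : ℕ, s ≠ -k) : DifferentiableAt ℂ (mellinShift f n) s := by
  have hpoch : (ascPochhammer ℂ n).eval s ≠ 0 := by
    simp only [ne_eq, ascPochhammer_eval_eq_zero_iff, not_exists, not_and]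
    exact fun k _ h => hpole k (by linear_combination h)
  have hs' : 0 < (s + n).re := by
    simp only [add_re, natCast_re]
    linarith
  exact ((differentiableAt_const _).mul ((ascPochhammer ℂ n).differentiableAt.inv hpoch)).mul
    (differentiableAt_mellin_iteratedDeriv_add hf hsupp n hs')

theorem mellinExtension_eventuallyEq_mellinShift {f : ℝ → ℂ} (hf : ContDiff ℝ ∞ f)
    (hsupp : HasCompactSupport f) {n : ℕ} {s : ℂ} (hs : -(n : ℝ) < s.re) :
    mellinExtension f =ᶠ[𝓝 s] mellinShift f n :=
  (continuous_re.continuousAt.eventually (lt_mem_nhds hs)).mono fun _ ht =>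
    mellinExtension_eq_mellinShift hf hsupp ht

theorem differentiableAt_mellinExtension {f : ℝ → ℂ} (hf : ContDiff ℝ ∞ f)
    (hsupp : HasCompactSupport f) {s : ℂ} (hpole : ∀ k : ℕ, s ≠ -k) :
    DifferentiableAt ℂ (mellinExtension f) s := by
  have hs : -((⌊-s.re⌋₊ + 1 : ℕ) : ℝ) < s.re := by
    push_cast
    linarith [Nat.lt_floor_add_one (-s.re)]
  exact (differentiableAt_mellinShift hf hsupp hs hpole).congr_of_eventuallyEq
    (mellinExtension_eventuallyEq_mellinShift hf hsupp hs)

theorem tendsto_mul_mellinExtension {f : ℝ → ℂ} (hf : ContDiff ℝ ∞ f)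
    (hsupp : HasCompactSupport f) (k : ℕ) :
    Tendsto (fun s => (s + k) * mellinExtension f s) (𝓝[≠] (-(k : ℂ)))
      (𝓝 (iteratedDeriv k f 0 / k.factorial)) := by
  set g : ℂ → ℂ := fun s => (-1) ^ (k + 1) * ((ascPochhammer ℂ k).eval s)⁻¹ *
    mellin (iteratedDeriv (k + 1) f) (s + ↑(k + 1))
  have hev : (fun s => (s + k) * mellinExtension f s) =ᶠ[𝓝[≠] (-(k : ℂ))] g := by
    have hk : -((k + 1 : ℕ) : ℝ) < (-(k : ℂ)).re := by simp
    filter_upwards [self_mem_nhdsWithin,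
      nhdsWithin_le_nhds (mellinExtension_eventuallyEq_mellinShift hf hsupp hk)] with s hne heq
    have hsk : s + k ≠ 0 := fun h => hne (mem_singleton_iff.mpr (by linear_combination h))
    rw [heq, mellinShift, ascPochhammer_succ_eval, mul_inv]
    linear_combination ((-1) ^ (k + 1) * ((ascPochhammer ℂ k).eval s)⁻¹ *
      mellin (iteratedDeriv (k + 1) f) (s + ↑(k + 1))) * mul_inv_cancel₀ hsk
  have hsign : ((-1) ^ k : ℂ) ≠ 0 := pow_ne_zero k (neg_ne_zero.mpr one_ne_zero)
  have hpoch : (ascPochhammer ℂ k).eval (-(k : ℂ)) = (-1) ^ k * k.factorial :=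
    ascPochhammer_eval_neg_natCast_self ℂ k
  have hcont : ContinuousAt g (-(k : ℂ)) := by
    have hP : (ascPochhammer ℂ k).eval (-(k : ℂ)) ≠ 0 := by
      rw [hpoch]
      exact mul_ne_zero hsign (Nat.cast_ne_zero.mpr k.factorial_ne_zero)
    exact (((differentiableAt_const _).mul ((ascPochhammer ℂ k).differentiableAt.inv hP)).mul
      (differentiableAt_mellin_iteratedDeriv_add hf hsupp (k + 1) (by simp))).continuousAt
  have hval : g (-(k : ℂ)) = iteratedDeriv k f 0 / k.factorial := by
    have hres :
        mellin (iteratedDeriv (k + 1) f) (-(k : ℂ) + ↑(k + 1)) = -iteratedDeriv k f 0 := by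
      rw [iteratedDeriv_succ, Nat.cast_succ, neg_add_cancel_left]
      exact mellin_one_deriv ((hf.iteratedDeriv k).of_le (by simp))
        (hsupp.iteratedDeriv k)
    simp only [g, hpoch, hres, mul_inv, pow_succ, div_eq_mul_inv]
    linear_combination (iteratedDeriv k f 0 * (k.factorial : ℂ)⁻¹) * mul_inv_cancel₀ hsign
  rw [← hval]
  exact (hcont.tendsto.mono_left nhdsWithin_le_nhds).congr' hev.symm

/-- For `ψ ∈ C₀^∞(ℝ)`, the function `L₁(s) = ∫₀^∞ yˢ ψ(y) dy`
converges and is holomorphic on `Re s > -1`, extends meromorphically to `ℂ` with all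
poles simple and contained in the negative integers, and
`lim_{s→-k} (s+k) L₁(s) = ψ^{(k-1)}(0)/(k-1)!`. -/
theorem stmt6 (ψ : ℝ → ℂ) (hψ : ContDiff ℝ (⊤ : ℕ∞) ψ) (hsupp : HasCompactSupport ψ) :
    (∀ s : ℂ, -1 < s.re →
      IntegrableOn (fun y : ℝ => (y : ℂ) ^ s * ψ y) (Set.Ioi 0)) ∧
    DifferentiableOn ℂ (fun s : ℂ => ∫ y in Set.Ioi (0:ℝ), (y : ℂ) ^ s * ψ y)
      {s : ℂ | -1 < s.re} ∧
    ∃ F : ℂ → ℂ,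
      (∀ s : ℂ, -1 < s.re → F s = ∫ y in Set.Ioi (0:ℝ), (y : ℂ) ^ s * ψ y) ∧
      DifferentiableOn ℂ F {s : ℂ | ∀ k : ℕ, s ≠ -((k : ℂ) + 1)} ∧
      ∀ k : ℕ, Tendsto (fun s : ℂ => (s + ((k : ℂ) + 1)) * F s)
        (𝓝[≠] (-((k : ℂ) + 1)))
        (𝓝 (iteratedDeriv k ψ 0 / (Nat.factorial k : ℂ))) := by
  have hL : (fun s : ℂ => ∫ y in Ioi (0 : ℝ), (y : ℂ) ^ s * ψ y) =
      fun s => mellin ψ (s + 1) := by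
    ext s
    simp [mellin]
  have hre {s : ℂ} (hs : -1 < s.re) : 0 < (s + 1).re := by
    simp only [add_re, one_re]
    linarith
  refine ⟨fun s hs => ?_, ?_, fun s => mellinExtension ψ (s + 1), fun s hs => ?_, ?_, fun k => ?_⟩
  · simpa [MellinConvergent] using
      mellinConvergent_of_hasCompactSupport hψ.continuous hsupp (hre hs)
  · rw [hL]
    exact fun s hs => (differentiableAt_comp_add_const.mpr <|
      mellin_differentiableAt_of_hasCompactSupport hψ.continuous hsupp (hre hs)).differentiableWithinAt
  · rw [congrFun hL s]
    exact mellinExtension_eq_mellin hψ hsupp (hre hs)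
  · exact fun s hs => (differentiableAt_comp_add_const.mpr <| differentiableAt_mellinExtension hψ
      hsupp fun k h => hs k (by linear_combination h)).differentiableWithinAt
  · have hshift : Tendsto (· + 1) (𝓝[≠] (-((k : ℂ) + 1))) (𝓝[≠] (-(k : ℂ))) := by
      refine tendsto_nhdsWithin_iff.mpr ⟨?_, eventually_nhdsWithin_of_forall fun s hs => ?_⟩
      · simpa using
          ((continuous_add_const (1 : ℂ)).tendsto (-((k : ℂ) + 1))).mono_left nhdsWithin_le_nhds
      · exact fun h => hs (mem_singleton_iff.mpr (by linear_combination mem_singleton_iff.mp h))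
    convert (tendsto_mul_mellinExtension hψ hsupp k).comp hshift using 2 with s
    simp only [Function.comp_apply]
    ring
end

section
/- Let f be a nonflat smooth function on a neighborhood of the origin in ℝⁿ with f(0) = 0, and let p ∈ ℤ₊ⁿ. Set d := d(f,xᵖ) := min{d > 0 : d·(p+𝟏) ∈ Γ₊(f)} and q := d·(p+𝟏). Then q is the unique point of intersection of the ray {t(p+𝟏) : t ≥ 0} with the topological boundary ∂Γ₊(f), and sup{−⟨a, p+𝟏⟩/l_f(a) : a ∈ ℝ₊ⁿ, l_f(a) ≠ 0} = −(p_j+1)/q_j for every j = 1,…,n, = −(⟨p⟩+n)/⟨q⟩ = −1/d, and this supremum is attained. -/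
open Filter Topology MeasureTheory Set

/-- The partial derivative `∂f/∂xᵢ`. -/
noncomputable def pd {n : ℕ} (i : Fin n) (f : (Fin n → ℝ) → ℝ) : (Fin n → ℝ) → ℝ :=
  fun x => fderiv ℝ f x (Pi.single i 1)

/-- The iterated partial derivative `∂^α f` for a multi-index `α`. -/
noncomputable def mderiv {n : ℕ} (α : Fin n → ℕ) (f : (Fin n → ℝ) → ℝ) : (Fin n → ℝ) → ℝ :=
  (List.finRange n).foldr (fun i g => (pd i)^[α i] g) f

/-- The Newton support: multi-indices with nonzero Taylor coefficient at the origin. -/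
def NewtonSupp {n : ℕ} (f : (Fin n → ℝ) → ℝ) : Set (Fin n → ℕ) :=
  {α | mderiv α f 0 ≠ 0}

/-- The Newton polyhedron `Γ₊(f)`. -/
noncomputable def NPoly {n : ℕ} (f : (Fin n → ℝ) → ℝ) : Set (Fin n → ℝ) :=
  convexHull ℝ {x | ∃ α ∈ NewtonSupp f, ∀ i, (α i : ℝ) ≤ x i}

/-- `l_f(a) = min{⟨a,α⟩ : α ∈ Γ₊(f)}`. -/
noncomputable def lfun {n : ℕ} (f : (Fin n → ℝ) → ℝ) (a : Fin n → ℝ) : ℝ :=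
  sInf {r | ∃ x ∈ NPoly f, r = ∑ i, a i * x i}

/-- A face of a polyhedron `P`: a set of the form `P ∩ H(a,l)` for a valid pair `(a,l)`. -/
def IsFace {n : ℕ} (P F : Set (Fin n → ℝ)) : Prop :=
  ∃ (a : Fin n → ℝ) (l : ℝ), (∀ x ∈ P, l ≤ ∑ i, a i * x i) ∧
    F = {x ∈ P | ∑ i, a i * x i = l}

/-- The Taylor coefficient `c_α = ∂^α f(0)/α!`. -/
noncomputable def taylorCoeff {n : ℕ} (f : (Fin n → ℝ) → ℝ) (α : Fin n → ℕ) : ℝ :=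
  mderiv α f 0 / ((∏ i, Nat.factorial (α i) : ℕ) : ℝ)

open Classical in
/-- The `γ`-part of `f`, as a polynomial: `f_γ(x) = ∑_{α ∈ γ ∩ ℤ₊ⁿ} c_α x^α`. -/
noncomputable def gammaPart {n : ℕ} (f : (Fin n → ℝ) → ℝ) (γ : Set (Fin n → ℝ)) :
    (Fin n → ℝ) → ℝ :=
  fun x => ∑ᶠ α : Fin n → ℕ,
    if (fun i => (α i : ℝ)) ∈ γ then taylorCoeff f α * ∏ i, x i ^ α i else 0

/-- Nondegeneracy over `ℝ` with respect to the Newton polyhedron: for every nonempty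
compact face `γ` of `Γ₊(f)`, the gradient of `f_γ` does not vanish on `(ℝ∖{0})ⁿ`. -/
def Nondeg {n : ℕ} (f : (Fin n → ℝ) → ℝ) : Prop :=
  ∀ γ : Set (Fin n → ℝ), IsFace (NPoly f) γ → γ.Nonempty → IsCompact γ →
    ∀ x : Fin n → ℝ, (∀ i, x i ≠ 0) → ∃ i, pd i (gammaPart f γ) x ≠ 0

/-- The class `Ê(U)`: for every valid pair `(a,l) ∈ ℤ₊ⁿ × ℤ₊` of the Newton
polyhedron of `f`, the limit defining the corresponding `γ`-part exists on a
neighborhood of the origin. -/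
def IsEhat {n : ℕ} (U : Set (Fin n → ℝ)) (f : (Fin n → ℝ) → ℝ) : Prop :=
  ∀ (a : Fin n → ℕ) (l : ℕ),
    (∀ x ∈ NPoly f, (l : ℝ) ≤ ∑ i, (a i : ℝ) * x i) →
    ∃ W ∈ 𝓝 (0 : Fin n → ℝ), W ⊆ U ∧ ∀ x ∈ W, ∃ L : ℝ,
      Tendsto (fun t : ℝ => f (fun i => t ^ (a i) * x i) / t ^ l)
        (𝓝[>] (0:ℝ)) (𝓝 L)

/-- The Newton distance `d(f,g) = min{d > 0 : d(Γ₊(g)+𝟏) ⊆ Γ₊(f)}`. -/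
noncomputable def ndist {n : ℕ} (f g : (Fin n → ℝ) → ℝ) : ℝ :=
  sInf {d | 0 < d ∧ ∀ β ∈ NPoly g, (fun i => d * (β i + 1)) ∈ NPoly f}

/-- The Newton distance `d(f,xᵖ) = min{d > 0 : d(p+𝟏) ∈ Γ₊(f)}`. -/
noncomputable def ndistP {n : ℕ} (f : (Fin n → ℝ) → ℝ) (p : Fin n → ℕ) : ℝ :=
  sInf {d | 0 < d ∧ (fun i => d * ((p i : ℝ) + 1)) ∈ NPoly f}

/-- The smallest face `τ_P(α)` of `P` containing `α`. -/
noncomputable def sFace {n : ℕ} (P : Set (Fin n → ℝ)) (α : Fin n → ℝ) : Set (Fin n → ℝ) :=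
  ⋂₀ {F | IsFace P F ∧ α ∈ F}

/-- Dimension of (the affine hull of) a subset of `ℝⁿ`. -/
noncomputable def sdim {n : ℕ} (F : Set (Fin n → ℝ)) : ℕ :=
  Module.finrank ℝ (vectorSpan ℝ F)

/-- `Γ₀(f) = ∂Γ₊(f) ∩ d(f,g)·(Γ₊(g)+𝟏)`. -/
noncomputable def Gamma0 {n : ℕ} (f g : (Fin n → ℝ) → ℝ) : Set (Fin n → ℝ) :=
  frontier (NPoly f) ∩ {x | ∃ β ∈ NPoly g, x = fun i => ndist f g * (β i + 1)}

/-- The Newton multiplicity `m(f,g) = max{n - dim τ_f(α) : α ∈ Γ₀(f)}`. -/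
noncomputable def nmult {n : ℕ} (f g : (Fin n → ℝ) → ℝ) : ℕ :=
  sSup {k | ∃ α ∈ Gamma0 f g, k = n - sdim (sFace (NPoly f) α)}

/-- The Newton multiplicity `m(f,xᵖ) = n - dim τ_f(q)`, `q = d(f,xᵖ)(p+𝟏)`. -/
noncomputable def nmultP {n : ℕ} (f : (Fin n → ℝ) → ℝ) (p : Fin n → ℕ) : ℕ :=
  n - sdim (sFace (NPoly f) (fun i => ndistP f p * ((p i : ℝ) + 1)))

/-- `f` is convenient: `Γ₊(f)` meets every coordinate axis. -/
def Convenient {n : ℕ} (f : (Fin n → ℝ) → ℝ) : Prop :=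
  ∀ i : Fin n, ∃ c : ℝ, (fun j => if j = i then c else 0) ∈ NPoly f

/-- The `γ`-part of `f ∈ Ê(U)` for the face cut out by a valid pair `(a,l)`, defined
as a limit. -/
noncomputable def gpart {n : ℕ} (f : (Fin n → ℝ) → ℝ) (a : Fin n → ℕ) (l : ℕ)
    (x : Fin n → ℝ) : ℝ :=
  limUnder (𝓝[>] (0:ℝ)) (fun t : ℝ => f (fun i => t ^ (a i) * x i) / t ^ l)

/-!
Since `f 0 = 0`, every exponent in the Newton support has `|α| ≥ 1`, so `Γ₊(f)` is a convex upper
set of `ℝⁿ` whose closure avoids the origin. An upper set is entered by a ray `t ↦ t • w` with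
`w > 0` at a single time `d`: the ray lies in the interior for `t > d` and outside the closure for
`t < d`, so `q = d • w` is its only boundary point. A supporting hyperplane at `q` has a normal
`a ≥ 0`, `a ≠ 0` (the set is an upper set), whence `l_f(a) = ⟨a, q⟩ = d ⟨a, w⟩`; and for every
`b ≥ 0` we have `l_f(b) ≤ ⟨b, q⟩ = d ⟨b, w⟩` because `q` lies in the closure. So
`-⟨b, w⟩ / l_f(b) ≤ -1 / d`, with equality at `a`.
-/

theorem isUpperSet_convexHull {𝕜 E : Type*} [Semiring 𝕜] [PartialOrder 𝕜] [AddCommGroup E]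
    [PartialOrder E] [IsOrderedAddMonoid E] [Module 𝕜 E] {s : Set E} (hs : IsUpperSet s) :
    IsUpperSet (convexHull 𝕜 s) := by
  intro x y hxy hx
  have hsub : s ⊆ (· + (y - x)) ⁻¹' convexHull 𝕜 s := fun z hz =>
    subset_convexHull 𝕜 s (hs (le_add_of_nonneg_right (sub_nonneg.2 hxy)) hz)
  simpa using convexHull_min hsub ((convex_convexHull 𝕜 s).translate_preimage_left _) hx

section Ray

variable {ι : Type*} {K : Set (ι → ℝ)} {w : ι → ℝ} {t : ℝ}

noncomputable def rayEntry (K : Set (ι → ℝ)) (w : ι → ℝ) : ℝ :=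
  sInf {t | 0 < t ∧ t • w ∈ K}

lemma rayEntry_nonneg : 0 ≤ rayEntry K w :=
  Real.sInf_nonneg fun _ ht => ht.1.le

variable [Finite ι]

lemma exists_pos_smul_mem (hK : IsUpperSet K) (hne : K.Nonempty) (hw : ∀ i, 0 < w i) :
    ∃ t : ℝ, 0 < t ∧ t • w ∈ K := by
  obtain ⟨x, hx⟩ := hne
  have hev : ∀ᶠ t : ℝ in atTop, 0 < t ∧ x ≤ t • w :=
    (eventually_gt_atTop 0).and <| eventually_all.2 fun i =>
      (tendsto_id.atTop_mul_const (hw i)).eventually_ge_atTop (x i)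
  obtain ⟨t, ht, hxt⟩ := hev.exists
  exact ⟨t, ht, hK hxt hx⟩

lemma smul_mem_of_rayEntry_lt (hK : IsUpperSet K) (hne : K.Nonempty) (hw : ∀ i, 0 < w i)
    (ht : rayEntry K w < t) : t • w ∈ K := by
  obtain ⟨s, ⟨-, hs⟩, hst⟩ := exists_lt_of_csInf_lt (exists_pos_smul_mem hK hne hw) ht
  exact hK (smul_le_smul_of_nonneg_right hst.le fun i => (hw i).le) hs

lemma rayEntry_smul_mem_closure (hK : IsUpperSet K) (hne : K.Nonempty) (hw : ∀ i, 0 < w i) :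
    rayEntry K w • w ∈ closure K := by
  have hmaps : MapsTo (· • w) (Ioi (rayEntry K w)) K := fun _ ht =>
    smul_mem_of_rayEntry_lt hK hne hw ht
  exact hmaps.closure (continuous_id.smul continuous_const) (by simp)

lemma rayEntry_pos (hK : IsUpperSet K) (hne : K.Nonempty) (h0 : 0 ∉ closure K)
    (hw : ∀ i, 0 < w i) : 0 < rayEntry K w := by
  refine rayEntry_nonneg.lt_of_ne fun h => h0 ?_
  simpa [← h] using rayEntry_smul_mem_closure hK hne hw

lemma smul_mem_interior_of_rayEntry_lt (hK : IsUpperSet K) (hne : K.Nonempty)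
    (hw : ∀ i, 0 < w i) (ht : rayEntry K w < t) : t • w ∈ interior K :=
  hK.mem_interior_of_forall_lt (rayEntry_smul_mem_closure hK hne hw) fun i =>
    mul_lt_mul_of_pos_right ht (hw i)

lemma rayEntry_le_of_smul_mem_closure (hK : IsUpperSet K) (hne : K.Nonempty)
    (h0 : 0 ∉ closure K) (hw : ∀ i, 0 < w i) (ht : t • w ∈ closure K) : rayEntry K w ≤ t := by
  by_contra! hlt
  obtain ⟨s, hts, hsd⟩ := exists_between (max_lt hlt (rayEntry_pos hK hne h0 hw))
  have hs : s • w ∈ interior K := hK.mem_interior_of_forall_lt ht fun i =>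
    mul_lt_mul_of_pos_right ((le_max_left _ _).trans_lt hts) (hw i)
  exact hsd.not_ge <| csInf_le ⟨0, fun _ h => h.1.le⟩
    ⟨(le_max_right _ _).trans_lt hts, interior_subset hs⟩

lemma smul_mem_closure_iff (hK : IsUpperSet K) (hne : K.Nonempty) (h0 : 0 ∉ closure K)
    (hw : ∀ i, 0 < w i) : t • w ∈ closure K ↔ rayEntry K w ≤ t := by
  refine ⟨rayEntry_le_of_smul_mem_closure hK hne h0 hw, fun ht => ?_⟩
  rcases ht.eq_or_lt with rfl | ht
  · exact rayEntry_smul_mem_closure hK hne hw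
  · exact subset_closure (smul_mem_of_rayEntry_lt hK hne hw ht)

lemma smul_mem_interior_iff (hK : IsUpperSet K) (hne : K.Nonempty) (h0 : 0 ∉ closure K)
    (hw : ∀ i, 0 < w i) : t • w ∈ interior K ↔ rayEntry K w < t := by
  refine ⟨fun ht => ?_, smul_mem_interior_of_rayEntry_lt hK hne hw⟩
  have hev : ∀ᶠ s in 𝓝[<] t, s • w ∈ interior K ∧ s < t :=
    (((continuous_id.smul continuous_const).tendsto t).eventually
      (isOpen_interior.mem_nhds ht)).filter_mono nhdsWithin_le_nhds |>.and self_mem_nhdsWithin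
  obtain ⟨s, hs, hst⟩ := hev.exists
  exact ((smul_mem_closure_iff hK hne h0 hw).1 (interior_subset_closure hs)).trans_lt hst

lemma smul_mem_frontier_iff (hK : IsUpperSet K) (hne : K.Nonempty) (h0 : 0 ∉ closure K)
    (hw : ∀ i, 0 < w i) : t • w ∈ frontier K ↔ t = rayEntry K w := by
  rw [frontier, Set.mem_sdiff, smul_mem_closure_iff hK hne h0 hw,
    smul_mem_interior_iff hK hne h0 hw, not_lt, eq_comm, le_antisymm_iff]

end Ray

section Support

variable {ι : Type*} [Fintype ι] {K : Set (ι → ℝ)}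

lemma nonneg_of_forall_le_dotProduct (hK : IsUpperSet K) {x : ι → ℝ} (hx : x ∈ K) {a : ι → ℝ}
    {c : ℝ} (h : ∀ y ∈ K, c ≤ a ⬝ᵥ y) : 0 ≤ a := by
  classical
  intro i
  by_contra! hai
  obtain ⟨k, hk⟩ := exists_nat_gt ((a ⬝ᵥ x - c) / -a i)
  have hmem : x + (k : ℝ) • Pi.single i 1 ∈ K :=
    hK (le_add_of_nonneg_right (smul_nonneg k.cast_nonneg (Pi.single_nonneg.2 zero_le_one))) hx
  have := h _ hmem
  rw [dotProduct_add, dotProduct_smul, dotProduct_single, smul_eq_mul, mul_one] at this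
  rw [div_lt_iff₀ (neg_pos.2 hai)] at hk
  linarith

lemma exists_supporting_dotProduct (hconv : Convex ℝ K) (hK : IsUpperSet K) (hne : K.Nonempty)
    {q : ι → ℝ} (hq : q ∉ interior K) :
    ∃ a : ι → ℝ, 0 ≤ a ∧ a ≠ 0 ∧ ∀ x ∈ K, a ⬝ᵥ q ≤ a ⬝ᵥ x := by
  classical
  obtain ⟨x, hx⟩ := hne
  have hint : (interior K).Nonempty :=
    ⟨x + 1, hK.mem_interior_of_forall_lt (subset_closure hx) fun i => by simp⟩
  obtain ⟨φ, u, hφ0, hφK, hφq⟩ := geometric_hahn_banach_of_nonempty_interior hconv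
    (convex_singleton q) (disjoint_singleton_right.2 hq) hint (singleton_nonempty q)
  set a := (dotProductEquiv ℝ ι).symm (-φ).toLinearMap
  have ha : ∀ y, a ⬝ᵥ y = -φ y := fun y =>
    LinearMap.congr_fun ((dotProductEquiv ℝ ι).apply_symm_apply _) y
  have hsupp : ∀ y ∈ K, a ⬝ᵥ q ≤ a ⬝ᵥ y := fun y hy => by
    rw [ha, ha]
    linarith [hφK y hy, hφq q rfl]
  refine ⟨a, nonneg_of_forall_le_dotProduct hK hx hsupp, fun ha0 => hφ0 ?_, hsupp⟩
  ext y
  simpa [ha0] using (ha y).symm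

lemma dotProduct_pos_of_ne_zero {a w : ι → ℝ} (ha : 0 ≤ a) (ha0 : a ≠ 0)
    (hw : ∀ i, 0 < w i) : 0 < a ⬝ᵥ w := by
  obtain ⟨j, hj⟩ := Function.ne_iff.1 ha0
  exact Finset.sum_pos' (fun i _ => mul_nonneg (ha i) (hw i).le)
    ⟨j, Finset.mem_univ j, mul_pos ((ha j).lt_of_ne' hj) (hw j)⟩

end Support

section NewtonPolyhedron

variable {n : ℕ} {f : (Fin n → ℝ) → ℝ}

lemma mderiv_zero (f : (Fin n → ℝ) → ℝ) : mderiv 0 f = f := by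
  simp [mderiv]

lemma sum_pos_of_mem_newtonSupp (hf0 : f 0 = 0) {α : Fin n → ℕ} (hα : α ∈ NewtonSupp f) :
    0 < ∑ i, α i := by
  refine Nat.pos_of_ne_zero fun h => hα ?_
  have hα0 : α = 0 := funext fun i => Finset.sum_eq_zero_iff.1 h i (Finset.mem_univ i)
  rw [hα0, mderiv_zero, hf0]

lemma isUpperSet_nPoly (f : (Fin n → ℝ) → ℝ) : IsUpperSet (NPoly f) :=
  isUpperSet_convexHull fun _ _ hxy ⟨α, hα, h⟩ => ⟨α, hα, fun i => (h i).trans (hxy i)⟩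

lemma nPoly_subset_nonneg : NPoly f ⊆ Ici 0 :=
  convexHull_min (fun _ ⟨_, _, h⟩ i => (Nat.cast_nonneg _).trans (h i)) (convex_Ici 0)

lemma closure_nPoly_subset (hf0 : f 0 = 0) : closure (NPoly f) ⊆ {x | 1 ≤ ∑ i, x i} := by
  refine closure_minimal (convexHull_min ?_ ?_)
    (isClosed_le continuous_const (continuous_finsetSum _ fun i _ => continuous_apply i))
  · rintro x ⟨α, hα, h⟩
    calc (1 : ℝ) ≤ ∑ i, (α i : ℝ) := by exact_mod_cast sum_pos_of_mem_newtonSupp hf0 hα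
      _ ≤ ∑ i, x i := Finset.sum_le_sum fun i _ => h i
  · exact convex_halfSpace_ge ⟨fun x y => Finset.sum_add_distrib, fun c x => by
      simp [Finset.mul_sum]⟩ 1

lemma zero_mem_lowerBounds_lfun {b : Fin n → ℝ} (hb : 0 ≤ b) :
    0 ∈ lowerBounds {r | ∃ x ∈ NPoly f, r = ∑ i, b i * x i} := by
  rintro _ ⟨x, hx, rfl⟩
  exact dotProduct_nonneg_of_nonneg hb (nPoly_subset_nonneg hx)

lemma lfun_nonneg {b : Fin n → ℝ} (hb : 0 ≤ b) : 0 ≤ lfun f b :=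
  Real.sInf_nonneg (zero_mem_lowerBounds_lfun hb)

lemma lfun_le_dotProduct_of_mem_closure {b x : Fin n → ℝ} (hb : 0 ≤ b)
    (hx : x ∈ closure (NPoly f)) : lfun f b ≤ b ⬝ᵥ x :=
  closure_minimal (fun y hy => csInf_le ⟨0, zero_mem_lowerBounds_lfun hb⟩ ⟨y, hy, rfl⟩)
    (isClosed_le continuous_const (continuous_const.dotProduct continuous_id)) hx

lemma lfun_eq_dotProduct {a q : Fin n → ℝ} (ha : 0 ≤ a) (hne : (NPoly f).Nonempty)
    (hq : q ∈ closure (NPoly f)) (hsupp : ∀ x ∈ NPoly f, a ⬝ᵥ q ≤ a ⬝ᵥ x) :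
    lfun f a = a ⬝ᵥ q :=
  le_antisymm (lfun_le_dotProduct_of_mem_closure ha hq) <|
    le_csInf (hne.elim fun x hx => ⟨_, x, hx, rfl⟩) fun _ ⟨x, hx, hr⟩ => hr ▸ hsupp x hx

lemma isGreatest_neg_dotProduct_div_lfun (hne : (NPoly f).Nonempty) {w : Fin n → ℝ}
    (hw : ∀ i, 0 < w i) {d : ℝ} (hd : 0 < d) (hq : d • w ∈ closure (NPoly f))
    {a : Fin n → ℝ} (ha : 0 ≤ a) (ha0 : a ≠ 0) (hsupp : ∀ x ∈ NPoly f, a ⬝ᵥ (d • w) ≤ a ⬝ᵥ x) :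
    IsGreatest {r | ∃ b : Fin n → ℝ, (∀ i, 0 ≤ b i) ∧ lfun f b ≠ 0 ∧ r = -(b ⬝ᵥ w / lfun f b)}
      (-(1 / d)) := by
  have haw := dotProduct_pos_of_ne_zero ha ha0 hw
  have hla : lfun f a = d * (a ⬝ᵥ w) := by
    rw [lfun_eq_dotProduct ha hne hq hsupp, dotProduct_smul, smul_eq_mul]
  refine ⟨⟨a, ha, by rw [hla]; positivity, by rw [hla]; field_simp⟩, ?_⟩
  rintro _ ⟨b, hb, hb0, rfl⟩
  have hlb : 0 < lfun f b := (lfun_nonneg hb).lt_of_ne' hb0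
  have hle : lfun f b ≤ d * (b ⬝ᵥ w) := by
    simpa [dotProduct_smul] using lfun_le_dotProduct_of_mem_closure hb hq
  rw [neg_le_neg_iff, div_le_div_iff₀ hd hlb]
  linarith

end NewtonPolyhedron

theorem stmt10_general (n : ℕ) (f : (Fin n → ℝ) → ℝ)
    (hnf : (NPoly f).Nonempty) (hf0 : f 0 = 0)
    (p : Fin n → ℕ) (d : ℝ) (hd : d = ndistP f p)
    (q : Fin n → ℝ) (hq : q = fun i => d * ((p i : ℝ) + 1)) :
    (q ∈ frontier (NPoly f) ∧
      ∀ t : ℝ, 0 ≤ t → (fun i => t * ((p i : ℝ) + 1)) ∈ frontier (NPoly f) →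
        (fun i => t * ((p i : ℝ) + 1)) = q) ∧
    IsGreatest {r : ℝ | ∃ a : Fin n → ℝ, (∀ i, 0 ≤ a i) ∧ lfun f a ≠ 0 ∧
      r = -((∑ i, a i * ((p i : ℝ) + 1)) / lfun f a)} (-(1 / d)) ∧
    (∀ j, -(1 / d) = -(((p j : ℝ) + 1) / q j)) ∧
    -(1 / d) = -(((∑ i, (p i : ℝ)) + n) / (∑ i, q i)) := by
  set w : Fin n → ℝ := fun i => (p i : ℝ) + 1
  have hw : ∀ i, 0 < w i := fun i => by positivity
  have hK := isUpperSet_nPoly f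
  have h0 : (0 : Fin n → ℝ) ∉ closure (NPoly f) := fun h =>
    absurd (closure_nPoly_subset hf0 h) (by simp)
  replace hd : d = rayEntry (NPoly f) w := hd
  replace hq : q = d • w := hq
  have hfr : ∀ t : ℝ, t • w ∈ frontier (NPoly f) ↔ t = d := fun t =>
    hd ▸ smul_mem_frontier_iff hK hnf h0 hw
  have hqfr : q ∈ frontier (NPoly f) := hq ▸ (hfr d).2 rfl
  have hdpos : 0 < d := hd ▸ rayEntry_pos hK hnf h0 hw
  obtain ⟨a, ha, ha0, hsupp⟩ :=
    exists_supporting_dotProduct (convex_convexHull ℝ _) hK hnf hqfr.2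
  refine ⟨⟨hqfr, fun t _ ht => by rw [(hfr t).1 ht, hq]; rfl⟩, ?_, fun j => ?_, ?_⟩
  · exact isGreatest_neg_dotProduct_div_lfun hnf hw hdpos (hq ▸ hqfr.1) ha ha0 (hq ▸ hsupp)
  · have hwj := (hw j).ne'
    rw [hq]
    show -(1 / d) = -(w j / (d * w j))
    field_simp
  · have hsum : ∑ i, q i = d * ((∑ i, (p i : ℝ)) + n) := by
      simp [hq, w, ← Finset.mul_sum, Finset.sum_add_distrib]
    have h1 : (1 : ℝ) ≤ ∑ i, q i := closure_nPoly_subset hf0 hqfr.1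
    rw [hsum] at h1 ⊢
    have hpn : (∑ i, (p i : ℝ)) + n ≠ 0 := fun h => by rw [h, mul_zero] at h1; linarith
    field_simp

/-- For `q = d(f,xᵖ)(p+𝟏)`: `q` is the unique intersection point of the
ray through `p+𝟏` with `∂Γ₊(f)`, and
`sup{-⟨a,p+𝟏⟩/l_f(a) : a ∈ ℝ₊ⁿ, l_f(a) ≠ 0} = -(p_j+1)/q_j = -(⟨p⟩+n)/⟨q⟩ = -1/d(f,xᵖ)`,
the supremum being attained. -/
theorem stmt10 (n : ℕ) (hn : 1 ≤ n) (U : Set (Fin n → ℝ)) (hU : IsOpen U)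
    (h0 : (0 : Fin n → ℝ) ∈ U)
    (f : (Fin n → ℝ) → ℝ) (hsm : ContDiffOn ℝ (⊤ : ℕ∞) f U)
    (hnf : (NPoly f).Nonempty) (hf0 : f 0 = 0)
    (p : Fin n → ℕ) (d : ℝ) (hd : d = ndistP f p)
    (q : Fin n → ℝ) (hq : q = fun i => d * ((p i : ℝ) + 1)) :
    (q ∈ frontier (NPoly f) ∧
      ∀ t : ℝ, 0 ≤ t → (fun i => t * ((p i : ℝ) + 1)) ∈ frontier (NPoly f) →
        (fun i => t * ((p i : ℝ) + 1)) = q) ∧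
    IsGreatest {r : ℝ | ∃ a : Fin n → ℝ, (∀ i, 0 ≤ a i) ∧ lfun f a ≠ 0 ∧
      r = -((∑ i, a i * ((p i : ℝ) + 1)) / lfun f a)} (-(1 / d)) ∧
    (∀ j, -(1 / d) = -(((p j : ℝ) + 1) / q j)) ∧
    -(1 / d) = -(((∑ i, (p i : ℝ)) + n) / (∑ i, q i)) :=
  stmt10_general n f hnf hf0 p d hd q hq
end
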